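/- arXiv:1806.07591 — 2 statements merged into one kernel-verified Lean document; each statement's English description precedes it below -/
import Mathlib

section
/- Let V ⊆ ℝ³ be a compact convex set with positive Lebesgue measure and let y be a point in the interior of V. Set r := max_{z ∈ V} |z − y|. Then there exists a point y' ∈ V such that ∫_V ( |x − y|² − min(|x − y|, |x − y'|)² ) dx ≥ (2²·3³)/(5²·10³) · r² · |V|. -/
/-!
Let `z ∈ V` be a point at maximal distance `r` from `y`, put `y' := y + s (z - y)` and let
`S ⊆ V` be the image of `V` under the homothety of centre `z` and ratio `t`. By Cauchy–Schwarz
every `x ∈ S` satisfies `|x - y|² - |x - y'|² ≥ s (2 - 4t - s) r²`, and `|S| = t³ |V|`, so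
integrating the nonnegative integrand over `S ⊆ V` gives `s (2 - 4t - s) t³ r² |V|`. This is
maximal at `s = 2/5`, `t = 3/10`, where it equals `(4/25) (27/1000) r² |V|`.
-/

open MeasureTheory AffineMap
open scoped RealInnerProductSpace

noncomputable section

/-- Euclidean 3-space. -/
abbrev E3 := EuclideanSpace ℝ (Fin 3)

section InnerProductSpace

variable {F : Type*} [NormedAddCommGroup F] [InnerProductSpace ℝ F]

theorem sq_dist_sub_sq_dist_lineMap_ge {y z v : F} (hv : dist v y ≤ dist z y) {s t : ℝ}
    (hs : 0 ≤ s) (ht : 0 ≤ t) :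
    s * (2 - 4 * t - s) * dist z y ^ 2 ≤
      dist (lineMap z v t) y ^ 2 - dist (lineMap z v t) (lineMap y z s) ^ 2 := by
  set u := z - y
  set w := v - y
  have hx : lineMap z v t - y = (1 - t) • u + t • w := by
    simp only [u, w, lineMap_apply_module]; module
  have hx' : lineMap z v t - lineMap y z s = ((1 - t) • u + t • w) - s • u := by
    simp only [u, w, lineMap_apply_module]; module
  have hwu : ‖w‖ ≤ ‖u‖ := by simpa only [u, w, dist_eq_norm] using hv
  rw [show dist z y = ‖u‖ from dist_eq_norm z y, dist_eq_norm, dist_eq_norm, hx, hx']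
  clear_value u w
  have hinner : -‖u‖ ^ 2 ≤ ⟪w, u⟫ := by
    have := neg_le_of_abs_le (abs_real_inner_le_norm w u)
    nlinarith [mul_le_mul_of_nonneg_right hwu (norm_nonneg u)]
  rw [norm_sub_sq_real]
  simp only [inner_add_left, real_inner_smul_left, real_inner_smul_right,
    real_inner_self_eq_norm_sq, norm_smul, Real.norm_of_nonneg hs]
  nlinarith [mul_le_mul_of_nonneg_left hinner (mul_nonneg hs ht)]

end InnerProductSpace

theorem sq_dist_sub_sq_dist_le_sq_dist_sub_sq_min {X : Type*} [PseudoMetricSpace X] (x y y' : X) :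
    dist x y ^ 2 - dist x y' ^ 2 ≤ dist x y ^ 2 - min (dist x y) (dist x y') ^ 2 := by
  gcongr
  exact min_le_right _ _

theorem sq_min_dist_le_sq_dist {X : Type*} [PseudoMetricSpace X] (x y y' : X) :
    min (dist x y) (dist x y') ^ 2 ≤ dist x y ^ 2 :=
  pow_le_pow_left₀ (le_min dist_nonneg dist_nonneg) (min_le_left _ _) 2

theorem Convex.image_homothety_subset {E : Type*} [AddCommGroup E] [Module ℝ E] {V : Set E}
    (hV : Convex ℝ V) {z : E} (hz : z ∈ V) {t : ℝ} (ht : t ∈ Set.Icc 0 1) :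
    homothety z t '' V ⊆ V := by
  rintro _ ⟨v, hv, rfl⟩
  rw [homothety_eq_lineMap]
  exact hV.lineMap_mem hz hv ht

theorem mul_measureReal_le_setIntegral_of_subset {X : Type*} [MeasurableSpace X] {μ : Measure X}
    {f : X → ℝ} {S V : Set X} {c : ℝ} (hSV : S ⊆ V) (hS : MeasurableSet S) (hSfin : μ S ≠ ⊤)
    (hf : IntegrableOn f V μ) (hf0 : ∀ x, 0 ≤ f x) (hc : ∀ x ∈ S, c ≤ f x) :
    c * μ.real S ≤ ∫ x in V, f x ∂μ :=
  (setIntegral_ge_of_const_le_real hS hSfin hc (hf.mono_set hSV)).trans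
    (setIntegral_mono_set hf (.of_forall hf0) (.of_forall hSV))

theorem stmt_0_general (V : Set E3) (hVcomp : IsCompact V) (hVconv : Convex ℝ V)
    (y : E3) (hy : y ∈ interior V)
    (r : ℝ) (hr : IsGreatest ((fun z => dist z y) '' V) r) :
    ∃ y' ∈ V,
      (∫ x in V, (dist x y ^ 2 - (min (dist x y) (dist x y')) ^ 2)) ≥
        ((2 ^ 2 * 3 ^ 3 : ℝ) / (5 ^ 2 * 10 ^ 3)) * r ^ 2 * (volume V).toReal := by
  obtain ⟨⟨z, hzV, rfl⟩, hfar⟩ := hr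
  set S := homothety z (3 / 10 : ℝ) '' V
  have hSV : S ⊆ V := hVconv.image_homothety_subset hzV ⟨by norm_num, by norm_num⟩
  have hS : IsCompact S := hVcomp.image (homothety_continuous z _)
  have hvolS : volume.real S = (3 / 10) ^ 3 * volume.real V := by
    norm_num [S, measureReal_def, Measure.addHaar_image_homothety, ENNReal.toReal_mul, abs_of_pos]
  refine ⟨lineMap y z (2 / 5 : ℝ), hVconv.lineMap_mem (interior_subset hy) hzV
    ⟨by norm_num, by norm_num⟩, ?_⟩
  have hbound : ∀ x ∈ S, 4 / 25 * dist z y ^ 2 ≤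
      dist x y ^ 2 - min (dist x y) (dist x (lineMap y z (2 / 5 : ℝ))) ^ 2 := by
    rintro _ ⟨v, hv, rfl⟩
    have := sq_dist_sub_sq_dist_lineMap_ge (hfar ⟨v, hv, rfl⟩) (s := 2 / 5) (t := 3 / 10)
      (by norm_num) (by norm_num)
    rw [homothety_eq_lineMap]
    refine le_trans ?_ (sq_dist_sub_sq_dist_le_sq_dist_sub_sq_min _ _ _)
    linarith
  calc ((2 ^ 2 * 3 ^ 3 : ℝ) / (5 ^ 2 * 10 ^ 3)) * dist z y ^ 2 * volume.real V
      = 4 / 25 * dist z y ^ 2 * volume.real S := by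
        rw [hvolS]; ring
    _ ≤ _ := mul_measureReal_le_setIntegral_of_subset hSV hS.measurableSet
        hS.measure_lt_top.ne ((by fun_prop : Continuous _).continuousOn.integrableOn_compact hVcomp)
        (fun x => sub_nonneg.2 (sq_min_dist_le_sq_dist _ _ _)) hbound

theorem stmt_0 (V : Set E3) (hVcomp : IsCompact V) (hVconv : Convex ℝ V)
    (hVvol : 0 < volume V) (y : E3) (hy : y ∈ interior V)
    (r : ℝ) (hr : IsGreatest ((fun z => dist z y) '' V) r) :
    ∃ y' ∈ V,
      (∫ x in V, (dist x y ^ 2 - (min (dist x y) (dist x y')) ^ 2)) ≥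
        ((2 ^ 2 * 3 ^ 3 : ℝ) / (5 ^ 2 * 10 ^ 3)) * r ^ 2 * (volume V).toReal :=
  stmt_0_general V hVcomp hVconv y hy r hr
end
end

section
/- Let n ≥ 2 and let Y_n be a minimizer of the quantization energy among subsets of Q with n points. Then for every y ∈ Y_n, with V its Voronoi cell and r := max_{z ∈ V} |z − y|, one has min_{z ∈ Y_n, z ≠ y} |y − z| ≥ r·(√(1 + 2⁴·3³/(5²·10³)) − 1) ≥ Γ₂ · |V|^{1/3}, where Γ₂ := (√(1 + 2⁴·3³/(5²·10³)) − 1)·ω₃^{−1/3}. -/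
/-!
Both estimates come from comparing `Y` with the set obtained by replacing one generator `y` by
another point `p ∈ Q`. Such a competitor is admissible although it may have fewer than `n` points:
adding points only lowers the energy, so a minimizer also beats every nonempty set of at most `n`
points of the infinite set `Q`.

Replacing `y` by the centroid `c` of its cell `V` changes the energy by at most `-|V| ‖c - y‖²`,
so `y` is the centroid of `V`. Replacing `y` by a farthest point `x₀` of `V`, at distance `r`,
lowers the energy by at least `r² / 10` per unit volume on a cube of side `r / 4` in `Q` next to
`x₀`, and costs at most `∫_V (|x - z|² - |x - y|²) = |V| |y - z|²` for any other generator `z`,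
the cross term vanishing because `y` is the centroid. With `|V| ≤ ω₃ r³` this gives
`r² ≤ 640 ω₃ |y - z|²`, which is stronger than the claimed separation.
-/

open MeasureTheory

noncomputable section

/-- The closed unit cube Q = [0,1]³. -/
def Qcube : Set E3 := {x | ∀ i, x i ∈ Set.Icc (0 : ℝ) 1}

/-- The quantization energy E(Y) = ∫_Q dist(x,Y)² dx. -/
def quantE (Y : Finset E3) : ℝ := ∫ x in Qcube, (Metric.infDist x (↑Y : Set E3)) ^ 2

/-- The Voronoi cell of a generator y ∈ Y, relative to Q. -/
def vorCell (Y : Finset E3) (y : E3) : Set E3 :=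
  {x ∈ Qcube | ∀ z ∈ Y, dist x y ≤ dist x z}

/-- Y is a minimizer of the quantization energy among n-point subsets of Q. -/
def IsMinimizer (n : ℕ) (Y : Finset E3) : Prop :=
  (↑Y : Set E3) ⊆ Qcube ∧ Y.card = n ∧
    ∀ Z : Finset E3, (↑Z : Set E3) ⊆ Qcube → Z.card = n → quantE Y ≤ quantE Z

/-- ω₃ = 4π/3, the volume of the unit ball in ℝ³. -/
def omega3 : ℝ := 4 * Real.pi / 3

/-- Γ₁ = (2/5)^{2/3} / 40. -/
def Gamma1 : ℝ := ((2 / 5 : ℝ) ^ ((2 : ℝ) / 3)) / 40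

/-- Γ₃ = ω₃^{-1/5} Γ₁^{1/5}. -/
def Gamma3 : ℝ := omega3 ^ (-(1 : ℝ) / 5) * Gamma1 ^ ((1 : ℝ) / 5)

/-- Γ₅ = (1/4)(√(1 + 2⁴·3³/(5²·10³)) − 1) Γ₃. -/
def Gamma5 : ℝ :=
  (1 / 4) * (Real.sqrt (1 + (2 ^ 4 * 3 ^ 3 : ℝ) / (5 ^ 2 * 10 ^ 3)) - 1) * Gamma3

/-- Γ₄, the diameter upper-bound constant. -/
def Gamma4 : ℝ :=
  (2 * (12 : ℝ) ^ ((1 : ℝ) / 4) * (16 : ℝ) ^ ((1 : ℝ) / 3) /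
      (Real.pi ^ ((1 : ℝ) / 4) * omega3 ^ ((1 : ℝ) / 12))) *
    (Real.sqrt (1 + (2 ^ 4 * 3 ^ 3 : ℝ) / (5 ^ 2 * 10 ^ 3)) - 1) ^ (-(1 : ℝ) / 2) *
    ((5 ^ 2 * 10 ^ 3 : ℝ) / (2 ^ 2 * 3 ^ 3)) ^ ((1 : ℝ) / 4)

open Metric Set

theorem setIntegral_norm_sub_sq_sub_norm_sub_sq {E : Type*} [NormedAddCommGroup E]
    [InnerProductSpace ℝ E] [CompleteSpace E] [MeasurableSpace E] {μ : Measure E} {S : Set E}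
    (hS : μ S ≠ ⊤) {y : E} (hint : IntegrableOn (fun x => x - y) S μ) (p : E) :
    ∫ x in S, (‖x - p‖ ^ 2 - ‖x - y‖ ^ 2) ∂μ =
      μ.real S * ‖p - y‖ ^ 2 - 2 * inner ℝ (p - y) (∫ x in S, (x - y) ∂μ) := by
  have h : ∀ x, ‖x - p‖ ^ 2 - ‖x - y‖ ^ 2 = ‖p - y‖ ^ 2 - 2 * inner ℝ (p - y) (x - y) :=
    fun x => by
      rw [show x - p = (x - y) - (p - y) by abel, norm_sub_sq_real, real_inner_comm]
      ring
  simp_rw [h]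
  rw [integral_sub (integrableOn_const (C := ‖p - y‖ ^ 2) hS)
    ((hint.const_inner (p - y)).const_mul 2), integral_const_mul, integral_inner hint,
    setIntegral_const, smul_eq_mul]

lemma Qcube_eq_preimage_Icc : Qcube = WithLp.ofLp ⁻¹' Icc 0 1 := by
  ext x
  simp [Qcube, Pi.le_def, forall_and]

lemma isClosed_Qcube : IsClosed Qcube := by
  rw [Qcube_eq_preimage_Icc]
  exact isClosed_Icc.preimage (PiLp.continuous_ofLp 2 _)

lemma convex_Qcube : Convex ℝ Qcube := by
  rw [Qcube_eq_preimage_Icc]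
  exact (convex_Icc 0 1).linear_preimage (WithLp.linearEquiv 2 ℝ (Fin 3 → ℝ)).toLinearMap

lemma zero_mem_Qcube : (0 : E3) ∈ Qcube := fun i => by simp

lemma dist_le_two_of_mem_Qcube {x x' : E3} (hx : x ∈ Qcube) (hx' : x' ∈ Qcube) :
    dist x x' ≤ 2 := by
  have hcoord : ∀ i, dist (x i) (x' i) ^ 2 ≤ 1 := fun i => by
    obtain ⟨⟨h₀, h₁⟩, h₀', h₁'⟩ := And.intro (hx i) (hx' i)
    rw [Real.dist_eq, sq_abs]
    nlinarith
  rw [EuclideanSpace.dist_eq, Real.sqrt_le_left (by norm_num), Fin.sum_univ_three]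
  linarith [hcoord 0, hcoord 1, hcoord 2]

lemma isCompact_Qcube : IsCompact Qcube :=
  isCompact_of_isClosed_isBounded isClosed_Qcube <| isBounded_closedBall.subset
    fun _ hx => dist_le_two_of_mem_Qcube hx zero_mem_Qcube

lemma exists_cube_subset_Qcube {x₀ : E3} (hx₀ : x₀ ∈ Qcube) {l : ℝ} (hl₀ : 0 ≤ l)
    (hl₁ : l ≤ 1) :
    ∃ O ⊆ Qcube, MeasurableSet O ∧ volume.real O = l ^ 3 ∧
      ∀ x ∈ O, dist x x₀ ^ 2 ≤ 3 * l ^ 2 := by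
  set a : Fin 3 → ℝ := fun i => min (x₀ i) (1 - l)
  have hx₀a : ∀ i, a i ≤ x₀ i ∧ x₀ i ≤ a i + l := fun i => by
    have := (hx₀ i).2
    simp only [a]
    constructor <;> rcases min_cases (x₀ i) (1 - l) <;> linarith
  have hO : ∀ x ∈ (WithLp.ofLp ⁻¹' Icc a (a + fun _ => l) : Set E3), ∀ i,
      a i ≤ x i ∧ x i ≤ a i + l :=
    fun x hx i => ⟨hx.1 i, hx.2 i⟩
  refine ⟨WithLp.ofLp ⁻¹' Icc a (a + fun _ => l), fun x hx i => ?_,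
    (isClosed_Icc.preimage (PiLp.continuous_ofLp 2 _)).measurableSet, ?_, fun x hx => ?_⟩
  · have := (hx₀ i).1
    have := hO x hx i
    simp only [a] at this ⊢
    constructor <;> rcases min_cases (x₀ i) (1 - l) <;> linarith
  · rw [measureReal_def, (PiLp.volume_preserving_ofLp _).measure_preimage
      measurableSet_Icc.nullMeasurableSet, Real.volume_Icc_pi]
    simp [ENNReal.toReal_ofReal hl₀]
  · have hcoord : ∀ i, dist (x i) (x₀ i) ^ 2 ≤ l ^ 2 := fun i => by
      obtain ⟨⟨h₀, h₁⟩, h₀', h₁'⟩ := And.intro (hO x hx i) (hx₀a i)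
      rw [Real.dist_eq, sq_abs]
      nlinarith
    rw [EuclideanSpace.dist_eq, Real.sq_sqrt (by positivity), Fin.sum_univ_three]
    linarith [hcoord 0, hcoord 1, hcoord 2]

lemma infinite_Qcube : Qcube.Infinite := by
  obtain ⟨O, hOQ, -, hO, -⟩ := exists_cube_subset_Qcube zero_mem_Qcube zero_le_one le_rfl
  intro hfin
  have : volume O = 0 := measure_mono_null hOQ (hfin.measure_zero _)
  norm_num [measureReal_def, this] at hO

lemma omega3_pos : 0 < omega3 := by unfold omega3; positivity

lemma volume_real_le_of_subset_closedBall {s : Set E3} {x : E3} {R : ℝ}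
    (hs : s ⊆ closedBall x R) (hR : 0 ≤ R) : volume.real s ≤ omega3 * R ^ 3 := by
  refine (measureReal_mono hs measure_closedBall_lt_top.ne).trans_eq ?_
  rw [measureReal_def, EuclideanSpace.volume_closedBall_fin_three, ENNReal.toReal_mul,
    ENNReal.toReal_pow, ENNReal.toReal_ofReal hR, ENNReal.toReal_ofReal (by positivity), omega3]
  ring

lemma omega3_rpow_mul_volume_real_rpow_le {s : Set E3} {x : E3} {R : ℝ}
    (hs : s ⊆ closedBall x R) (hR : 0 ≤ R) :
    omega3 ^ (-(1 : ℝ) / 3) * volume.real s ^ ((1 : ℝ) / 3) ≤ R :=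
  calc omega3 ^ (-(1 : ℝ) / 3) * volume.real s ^ ((1 : ℝ) / 3)
      ≤ omega3 ^ (-(1 : ℝ) / 3) * (omega3 * R ^ 3) ^ ((1 : ℝ) / 3) := by
        refine mul_le_mul_of_nonneg_left ?_ (Real.rpow_nonneg omega3_pos.le _)
        exact Real.rpow_le_rpow measureReal_nonneg
          (volume_real_le_of_subset_closedBall hs hR) (by norm_num)
    _ = R := by
        rw [Real.mul_rpow omega3_pos.le (by positivity), ← mul_assoc,
          ← Real.rpow_add omega3_pos, ← Real.rpow_natCast, ← Real.rpow_mul hR]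
        norm_num

lemma integrableOn_of_subset_Qcube {F : Type*} [NormedAddCommGroup F] {f : E3 → F}
    (hf : Continuous f) {s : Set E3} (hs : s ⊆ Qcube) : IntegrableOn f s :=
  (hf.continuousOn.integrableOn_compact isCompact_Qcube).mono_set hs

lemma measure_ne_top_of_subset_Qcube {s : Set E3} (hs : s ⊆ Qcube) : volume s ≠ ⊤ :=
  (measure_mono hs |>.trans_lt isCompact_Qcube.measure_lt_top).ne

section Voronoi

variable {Y : Finset E3} {x y p w : E3}

lemma vorCell_subset_Qcube : vorCell Y y ⊆ Qcube := fun _ hx => hx.1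

lemma measurableSet_vorCell : MeasurableSet (vorCell Y y) := by
  have : vorCell Y y = Qcube ∩ ⋂ z ∈ Y, {x | dist x y ≤ dist x z} := by ext; simp [vorCell]
  rw [this]
  exact isClosed_Qcube.measurableSet.inter <|
    .biInter Y.countable_toSet fun z _ => measurableSet_le (by fun_prop) (by fun_prop)

lemma infDist_eq_dist_of_mem_vorCell (hy : y ∈ Y) (hx : x ∈ vorCell Y y) :
    infDist x Y = dist x y := by
  obtain ⟨w, hw, hxw⟩ := Y.finite_toSet.isCompact.exists_infDist_eq_dist ⟨y, hy⟩ x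
  exact (infDist_le_dist_of_mem (Finset.mem_coe.2 hy)).antisymm (hxw ▸ hx.2 w hw)

lemma infDist_insert_erase_le_of_notMem_vorCell (hy : y ∈ Y) (hxQ : x ∈ Qcube)
    (hx : x ∉ vorCell Y y) : infDist x (insert p (Y.erase y) : Finset E3) ≤ infDist x Y := by
  obtain ⟨w, hw, hxw⟩ := Y.finite_toSet.isCompact.exists_infDist_eq_dist ⟨y, hy⟩ x
  have hwy : w ≠ y := by
    rintro rfl
    exact hx ⟨hxQ, fun z hz => hxw ▸ infDist_le_dist_of_mem (Finset.mem_coe.2 hz)⟩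
  rw [hxw]
  exact infDist_le_dist_of_mem (by simp [hwy, Finset.mem_coe.1 hw])

lemma sq_infDist_insert_erase_sub_le (hy : y ∈ Y) (hw : w ∈ insert p (Y.erase y))
    (hx : x ∈ Qcube) :
    infDist x (insert p (Y.erase y) : Finset E3) ^ 2 - infDist x Y ^ 2 ≤
      (vorCell Y y).indicator (fun x => dist x w ^ 2 - dist x y ^ 2) x := by
  by_cases hxV : x ∈ vorCell Y y
  · rw [indicator_of_mem hxV, infDist_eq_dist_of_mem_vorCell hy hxV]
    gcongr
    exacts [infDist_nonneg, infDist_le_dist_of_mem (Finset.mem_coe.2 hw)]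
  · rw [indicator_of_notMem hxV, sub_nonpos]
    exact pow_le_pow_left₀ infDist_nonneg
      (infDist_insert_erase_le_of_notMem_vorCell hy hx hxV) 2

lemma sq_infDist_insert_erase_sub_le_of_dist_sq_le {x₀ : E3} (hy : y ∈ Y)
    (hx₀ : x₀ ∈ vorCell Y y) (hx : dist x x₀ ^ 2 ≤ 3 * (dist x₀ y / 4) ^ 2) :
    infDist x (insert x₀ (Y.erase y) : Finset E3) ^ 2 - infDist x Y ^ 2 ≤
      -(dist x₀ y ^ 2 / 10) := by
  set r := dist x₀ y
  set s := dist x x₀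
  have hs : s ≤ 9 / 20 * r := by
    have : 0 ≤ s := dist_nonneg
    nlinarith [dist_nonneg (x := x₀) (y := y)]
  have hg : infDist x (insert x₀ (Y.erase y) : Finset E3) ≤ s :=
    infDist_le_dist_of_mem (by simp)
  have hf : r - s ≤ infDist x Y := by
    have := infDist_le_infDist_add_dist (x := x₀) (y := x) (s := (Y : Set E3))
    rw [infDist_eq_dist_of_mem_vorCell hy hx₀, dist_comm x₀ x] at this
    linarith
  have hr : 0 ≤ r - s := by linarith [dist_nonneg (x := x₀) (y := y)]
  nlinarith [pow_le_pow_left₀ infDist_nonneg hg 2, pow_le_pow_left₀ hr hf 2]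

lemma sq_infDist_insert_erase_sub_le_indicator_add_indicator {x₀ z : E3} {O : Set E3}
    (hy : y ∈ Y) (hx₀ : x₀ ∈ vorCell Y y) (hO : ∀ x ∈ O, dist x x₀ ^ 2 ≤ 3 * (dist x₀ y / 4) ^ 2)
    (hz : z ∈ Y) (hzy : z ≠ y) (hx : x ∈ Qcube) :
    infDist x (insert x₀ (Y.erase y) : Finset E3) ^ 2 - infDist x Y ^ 2 ≤
      O.indicator (fun _ => -(dist x₀ y ^ 2 / 10)) x +
        (vorCell Y y).indicator (fun x => dist x z ^ 2 - dist x y ^ 2) x := by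
  by_cases hxO : x ∈ O
  · have hV : 0 ≤ (vorCell Y y).indicator (fun x => dist x z ^ 2 - dist x y ^ 2) x :=
      indicator_nonneg (fun x hxV => sub_nonneg.2 (pow_le_pow_left₀ dist_nonneg (hxV.2 z hz) 2)) x
    rw [indicator_of_mem hxO]
    linarith [sq_infDist_insert_erase_sub_le_of_dist_sq_le hy hx₀ (hO x hxO)]
  · rw [indicator_of_notMem hxO, zero_add]
    exact sq_infDist_insert_erase_sub_le hy (by simp [hz, hzy]) hx

end Voronoi

lemma integrableOn_sq_infDist (Y : Finset E3) : IntegrableOn (fun x => infDist x Y ^ 2) Qcube :=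
  integrableOn_of_subset_Qcube ((continuous_infDist_pt _).pow 2) subset_rfl

lemma quantE_anti {Z Z' : Finset E3} (h : Z ⊆ Z') (hZ : Z.Nonempty) : quantE Z' ≤ quantE Z :=
  setIntegral_mono_on (integrableOn_sq_infDist _) (integrableOn_sq_infDist _)
    isClosed_Qcube.measurableSet fun _ _ => pow_le_pow_left₀ infDist_nonneg
      (infDist_le_infDist_of_subset (Finset.coe_subset.2 h) (Finset.coe_nonempty.2 hZ)) 2

namespace IsMinimizer

variable {n : ℕ} {Y : Finset E3} {y : E3}

theorem quantE_le_of_card_le (hY : IsMinimizer n Y) {Z : Finset E3} (hZQ : ↑Z ⊆ Qcube)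
    (hZ : Z.Nonempty) (hcard : Z.card ≤ n) : quantE Y ≤ quantE Z := by
  obtain ⟨T, hTQ, hT⟩ :=
    (infinite_Qcube.sdiff Z.finite_toSet).exists_subset_card_eq (n - Z.card)
  have hdisj : Disjoint Z T :=
    Finset.disjoint_coe.1 <| disjoint_of_subset_right hTQ disjoint_sdiff_right
  calc quantE Y ≤ quantE (Z ∪ T) :=
        hY.2.2 _ (by push_cast; exact union_subset hZQ (hTQ.trans sdiff_subset))
          (by rw [Finset.card_union_of_disjoint hdisj]; omega)
    _ ≤ quantE Z := quantE_anti Finset.subset_union_left hZ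

theorem setIntegral_nonneg_of_insert_erase (hY : IsMinimizer n Y) (hy : y ∈ Y) {p : E3}
    (hp : p ∈ Qcube) {F : E3 → ℝ} (hF : IntegrableOn F Qcube)
    (hle : ∀ x ∈ Qcube,
      infDist x (insert p (Y.erase y) : Finset E3) ^ 2 - infDist x Y ^ 2 ≤ F x) :
    0 ≤ ∫ x in Qcube, F x := by
  have hcard : (insert p (Y.erase y)).card ≤ n := by
    have := Finset.card_insert_le p (Y.erase y)
    rw [Finset.card_erase_of_mem hy, hY.2.1] at this
    have := hY.2.1 ▸ Finset.card_pos.2 ⟨y, hy⟩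
    omega
  have hZQ : ↑(insert p (Y.erase y)) ⊆ Qcube := by
    rw [Finset.coe_insert]
    exact insert_subset hp ((Finset.coe_subset.2 (Y.erase_subset y)).trans hY.1)
  have hZ := hY.quantE_le_of_card_le hZQ (Finset.insert_nonempty _ _) hcard
  calc 0 ≤ quantE (insert p (Y.erase y)) - quantE Y := sub_nonneg.2 hZ
    _ = ∫ x in Qcube,
          (infDist x (insert p (Y.erase y) : Finset E3) ^ 2 - infDist x Y ^ 2) :=
        (integral_sub (integrableOn_sq_infDist _) (integrableOn_sq_infDist _)).symm
    _ ≤ ∫ x in Qcube, F x :=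
        setIntegral_mono_on ((integrableOn_sq_infDist _).sub (integrableOn_sq_infDist _)) hF
          isClosed_Qcube.measurableSet hle

theorem setIntegral_vorCell_sub_eq_zero (hY : IsMinimizer n Y) (hy : y ∈ Y) :
    ∫ x in vorCell Y y, (x - y) = 0 := by
  set V := vorCell Y y
  have hVfin := measure_ne_top_of_subset_Qcube (vorCell_subset_Qcube (Y := Y) (y := y))
  by_cases hV0 : volume V = 0
  · simp [Measure.restrict_eq_zero.2 hV0]
  have hm : 0 < volume.real V := ENNReal.toReal_pos hV0 hVfin
  have hint : IntegrableOn (fun x : E3 => x - y) V :=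
    integrableOn_of_subset_Qcube (by fun_prop) vorCell_subset_Qcube
  set c := ⨍ x in V, x with hc_def
  have hc : c ∈ Qcube := convex_Qcube.set_average_mem isClosed_Qcube hV0 hVfin
    ((ae_restrict_iff' measurableSet_vorCell).2 (.of_forall fun _ hx => hx.1))
    (integrableOn_of_subset_Qcube continuous_id vorCell_subset_Qcube)
  have hbar : ∫ x in V, (x - y) = volume.real V • (c - y) := by
    rw [integral_sub (integrableOn_of_subset_Qcube (f := fun x => x) continuous_id
      vorCell_subset_Qcube) (integrableOn_const hVfin), setIntegral_const, hc_def,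
      setAverage_eq, smul_sub, smul_inv_smul₀ hm.ne']
  have key := hY.setIntegral_nonneg_of_insert_erase hy hc
    (((integrableOn_of_subset_Qcube (by fun_prop) vorCell_subset_Qcube).integrable_indicator
      measurableSet_vorCell).integrableOn)
    fun x hx => sq_infDist_insert_erase_sub_le hy (Finset.mem_insert_self c _) hx
  simp only [setIntegral_indicator measurableSet_vorCell, inter_eq_right.2 vorCell_subset_Qcube,
    dist_eq_norm] at key
  rw [setIntegral_norm_sub_sq_sub_norm_sub_sq hVfin hint, hbar, real_inner_smul_right,
    real_inner_self_eq_norm_sq] at key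
  have hcy : ‖c - y‖ ^ 2 ≤ 0 := by nlinarith
  rw [hbar, norm_eq_zero.1 (pow_eq_zero_iff two_ne_zero |>.1 (hcy.antisymm (sq_nonneg _))),
    smul_zero]

theorem setIntegral_vorCell_dist_sq_sub_dist_sq (hY : IsMinimizer n Y) (hy : y ∈ Y) (z : E3) :
    ∫ x in vorCell Y y, (dist x z ^ 2 - dist x y ^ 2) =
      volume.real (vorCell Y y) * dist y z ^ 2 := by
  simp only [dist_eq_norm]
  rw [setIntegral_norm_sub_sq_sub_norm_sub_sq
    (measure_ne_top_of_subset_Qcube vorCell_subset_Qcube)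
    (integrableOn_of_subset_Qcube (by fun_prop) vorCell_subset_Qcube),
    hY.setIntegral_vorCell_sub_eq_zero hy, inner_zero_right, mul_zero, sub_zero, norm_sub_rev]

theorem sq_le_mul_sq_dist (hY : IsMinimizer n Y) (hy : y ∈ Y) {r : ℝ}
    (hr : IsGreatest ((fun x => dist x y) '' vorCell Y y) r) {z : E3} (hz : z ∈ Y)
    (hzy : z ≠ y) : r ^ 2 ≤ 640 * omega3 * dist y z ^ 2 := by
  obtain ⟨⟨x₀, hx₀, rfl⟩, hmax⟩ := hr
  dsimp only at hmax ⊢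
  set r := dist x₀ y
  set V := vorCell Y y
  have hr0 : 0 ≤ r := dist_nonneg
  have hV : V ⊆ closedBall y r := fun x hx => hmax (mem_image_of_mem _ hx)
  obtain ⟨O, hOQ, hOm, hOvol, hOx₀⟩ := exists_cube_subset_Qcube hx₀.1 (l := r / 4)
    (by positivity) (by linarith [dist_le_two_of_mem_Qcube hx₀.1 (hY.1 hy)])
  have hOint : IntegrableOn (O.indicator fun _ => -(r ^ 2 / 10)) Qcube :=
    ((integrableOn_const (measure_ne_top_of_subset_Qcube hOQ)).integrable_indicator
      hOm).integrableOn
  have hVint : IntegrableOn (V.indicator fun x => dist x z ^ 2 - dist x y ^ 2) Qcube :=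
    ((integrableOn_of_subset_Qcube (by fun_prop) vorCell_subset_Qcube).integrable_indicator
      measurableSet_vorCell).integrableOn
  have key := hY.setIntegral_nonneg_of_insert_erase hy hx₀.1
    (F := fun x => O.indicator (fun _ => -(r ^ 2 / 10)) x +
      V.indicator (fun x => dist x z ^ 2 - dist x y ^ 2) x) (hOint.add hVint)
    fun x => sq_infDist_insert_erase_sub_le_indicator_add_indicator hy hx₀ hOx₀ hz hzy
  rw [integral_add hOint hVint, setIntegral_indicator hOm,
    setIntegral_indicator measurableSet_vorCell, inter_eq_right.2 hOQ,
    inter_eq_right.2 vorCell_subset_Qcube, setIntegral_const, smul_eq_mul, hOvol,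
    hY.setIntegral_vorCell_dist_sq_sub_dist_sq hy] at key
  have hm := mul_le_mul_of_nonneg_right (volume_real_le_of_subset_closedBall hV hr0)
    (sq_nonneg (dist y z))
  rcases hr0.eq_or_lt with h | h
  · rw [← h, zero_pow two_ne_zero]
    have := omega3_pos
    positivity
  · refine le_of_mul_le_mul_left ?_ (pow_pos h 3)
    nlinarith

end IsMinimizer

theorem stmt_2_general (n : ℕ) (Y : Finset E3) (hY : IsMinimizer n Y)
    (y : E3) (hyY : y ∈ Y) (r : ℝ)
    (hr : IsGreatest ((fun z => dist z y) '' vorCell Y y) r) :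
    (∀ z ∈ Y, z ≠ y →
        dist y z ≥ r * (Real.sqrt (1 + (2 ^ 4 * 3 ^ 3 : ℝ) / (5 ^ 2 * 10 ^ 3)) - 1)) ∧
      r * (Real.sqrt (1 + (2 ^ 4 * 3 ^ 3 : ℝ) / (5 ^ 2 * 10 ^ 3)) - 1) ≥
        (Real.sqrt (1 + (2 ^ 4 * 3 ^ 3 : ℝ) / (5 ^ 2 * 10 ^ 3)) - 1) * omega3 ^ (-(1 : ℝ) / 3) *
          (volume (vorCell Y y)).toReal ^ ((1 : ℝ) / 3) := by
  set ε := Real.sqrt (1 + (2 ^ 4 * 3 ^ 3 : ℝ) / (5 ^ 2 * 10 ^ 3)) - 1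
  have hε₀ : 0 ≤ ε := by
    rw [sub_nonneg, Real.one_le_sqrt]
    norm_num
  have hε₁ : ε ≤ 1 / 100 := by
    rw [sub_le_iff_le_add, Real.sqrt_le_left (by norm_num)]
    norm_num
  obtain ⟨x₀, -, hx₀r⟩ := hr.1
  have hr₀ : 0 ≤ r := hx₀r ▸ dist_nonneg
  refine ⟨fun z hz hzy => ?_, ?_⟩
  · have hsep := hY.sq_le_mul_sq_dist hyY hr hz hzy
    have hω : omega3 ≤ 16 / 3 := by
      unfold omega3
      linarith [Real.pi_le_four]
    refine (pow_le_pow_iff_left₀ (mul_nonneg hr₀ hε₀) dist_nonneg two_ne_zero).1 ?_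
    nlinarith [mul_le_mul_of_nonneg_left hε₁ hε₀, sq_nonneg (dist y z)]
  · rw [← measureReal_def, mul_assoc, mul_comm r]
    exact mul_le_mul_of_nonneg_left (omega3_rpow_mul_volume_real_rpow_le
      (fun x hx => hr.2 (mem_image_of_mem _ hx)) hr₀) hε₀

theorem stmt_2 (n : ℕ) (hn : 2 ≤ n) (Y : Finset E3) (hY : IsMinimizer n Y)
    (y : E3) (hyY : y ∈ Y) (r : ℝ)
    (hr : IsGreatest ((fun z => dist z y) '' vorCell Y y) r) :
    (∀ z ∈ Y, z ≠ y →
        dist y z ≥ r * (Real.sqrt (1 + (2 ^ 4 * 3 ^ 3 : ℝ) / (5 ^ 2 * 10 ^ 3)) - 1)) ∧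
      r * (Real.sqrt (1 + (2 ^ 4 * 3 ^ 3 : ℝ) / (5 ^ 2 * 10 ^ 3)) - 1) ≥
        (Real.sqrt (1 + (2 ^ 4 * 3 ^ 3 : ℝ) / (5 ^ 2 * 10 ^ 3)) - 1) * omega3 ^ (-(1 : ℝ) / 3) *
          (volume (vorCell Y y)).toReal ^ ((1 : ℝ) / 3) :=
  stmt_2_general n Y hY y hyY r hr
end
end
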